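/- If every member of a set a is a level, then pot(a) is itself a level. -/

import Mathlib

/-!
Members of a history are transitive (by ∈-induction), so every `x ∈ h` is the level
`pot (x ∩ h)` of the history `x ∩ h`, and every level `V` equals `pot` of its level members.
Given `a` consisting of levels, the levels in `pot a` then form a history `H`, and
`a ⊆ H ⊆ pot a` gives `pot a = pot H`.
-/

def pot (a : ZFSet) : ZFSet :=
  ZFSet.sep (fun x => ∃ c ∈ a, x ⊆ c) (ZFSet.powerset (ZFSet.sUnion a))

def Potent (a : ZFSet) : Prop := ∀ x, (∃ c, x ⊆ c ∧ c ∈ a) → x ∈ a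

def IsHistory (h : ZFSet) : Prop := ∀ x ∈ h, x = pot (x ∩ h)

def IsLevel (s : ZFSet) : Prop := ∃ h, IsHistory h ∧ s = pot h

open ZFSet

theorem mem_pot {x a : ZFSet} : x ∈ pot a ↔ ∃ c ∈ a, x ⊆ c := by
  rw [pot, mem_sep, mem_powerset, and_iff_right_iff_imp]
  rintro ⟨c, hc, hxc⟩ y hy
  exact mem_sUnion.2 ⟨c, hc, hxc hy⟩

theorem subset_pot (s : ZFSet) : s ⊆ pot s :=
  fun c hc => mem_pot.2 ⟨c, hc, subset_rfl⟩

theorem pot_mono {s t : ZFSet} (h : s ⊆ t) : pot s ⊆ pot t := fun _ hx =>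
  let ⟨c, hc, hxc⟩ := mem_pot.1 hx
  mem_pot.2 ⟨c, h hc, hxc⟩

theorem pot_subset_of_subset_pot {s t : ZFSet} (h : t ⊆ pot s) : pot t ⊆ pot s := fun _ hx =>
  let ⟨_, hc, hxc⟩ := mem_pot.1 hx
  let ⟨d, hd, hcd⟩ := mem_pot.1 (h hc)
  mem_pot.2 ⟨d, hd, hxc.trans hcd⟩

theorem pot_eq_of_subset_of_subset_pot {s t : ZFSet} (hst : s ⊆ t) (hts : t ⊆ pot s) :
    pot t = pot s :=
  subset_antisymm (pot_subset_of_subset_pot hts) (pot_mono hst)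

theorem isTransitive_pot {s : ZFSet} (hs : ∀ c ∈ s, c.IsTransitive) : (pot s).IsTransitive :=
  fun _ hx _ hy =>
    let ⟨c, hc, hxc⟩ := mem_pot.1 hx
    mem_pot.2 ⟨c, hc, (hs c hc).subset_of_mem (hxc hy)⟩

namespace IsHistory

variable {h : ZFSet}

theorem isTransitive_of_mem (hh : IsHistory h) {x : ZFSet} : x ∈ h → x.IsTransitive := by
  induction x using ZFSet.inductionOn with
  | _ x ih =>
    intro hx
    have hx_eq := hh x hx
    -- each `d ∈ x ∩ h` is transitive by induction, hence `d ∩ h ⊆ x ∩ h` and `d ⊆ x`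
    have hsub : ∀ d ∈ x ∩ h, d ⊆ x := by
      intro d hd
      obtain ⟨hdx, hdh⟩ := mem_inter.1 hd
      have hdd : d ∩ h ⊆ x ∩ h := fun e he =>
        have he' := mem_inter.1 he
        mem_inter.2 ⟨hx_eq ▸ mem_pot.2 ⟨d, hd, (ih d hdx hdh).subset_of_mem he'.1⟩, he'.2⟩
      rw [hh d hdh, hx_eq]
      exact pot_mono hdd
    intro y hy
    rw [hx_eq] at hy
    obtain ⟨d, hd, hyd⟩ := mem_pot.1 hy
    exact hyd.trans (hsub d hd)

theorem inter_of_mem (hh : IsHistory h) {x : ZFSet} (hx : x ∈ h) : IsHistory (x ∩ h) := by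
  intro y hy
  obtain ⟨hyx, hyh⟩ := mem_inter.1 hy
  have hyxh : y ∩ (x ∩ h) = y ∩ h := by
    ext z
    simp only [mem_inter]
    exact ⟨fun hz => ⟨hz.1, hz.2.2⟩,
      fun hz => ⟨hz.1, (hh.isTransitive_of_mem hx).subset_of_mem hyx hz.1, hz.2⟩⟩
  rw [hyxh]
  exact hh y hyh

theorem isLevel_of_mem (hh : IsHistory h) {x : ZFSet} (hx : x ∈ h) : IsLevel x :=
  ⟨x ∩ h, hh.inter_of_mem hx, hh x hx⟩

end IsHistory

namespace IsLevel

variable {V : ZFSet}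

theorem isTransitive (hV : IsLevel V) : V.IsTransitive := by
  obtain ⟨h, hh, rfl⟩ := hV
  exact isTransitive_pot fun _ => hh.isTransitive_of_mem

theorem eq_pot_sep (hV : IsLevel V) : V = pot (V.sep IsLevel) := by
  obtain ⟨h, hh, rfl⟩ := hV
  refine (pot_eq_of_subset_of_subset_pot ?_ sep_subset).symm
  exact fun x hx => mem_sep.2 ⟨subset_pot h hx, hh.isLevel_of_mem hx⟩

end IsLevel

theorem stmt14 (a : ZFSet) (h : ∀ x ∈ a, IsLevel x) : IsLevel (pot a) := by
  set H := (pot a).sep IsLevel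
  have hpot : (pot a).IsTransitive := isTransitive_pot fun c hc => (h c hc).isTransitive
  have hH : IsHistory H := by
    intro V hV
    obtain ⟨hVa, hVl⟩ := mem_sep.1 hV
    have hinter : V ∩ H = V.sep IsLevel := by
      ext w
      simp only [mem_inter, mem_sep, H]
      exact ⟨fun hw => ⟨hw.1, hw.2.2⟩, fun hw => ⟨hw.1, hpot.subset_of_mem hVa hw.1, hw.2⟩⟩
    rw [hinter]
    exact hVl.eq_pot_sep
  refine ⟨H, hH, (pot_eq_of_subset_of_subset_pot ?_ sep_subset).symm⟩
  exact fun c hc => mem_sep.2 ⟨subset_pot a hc, h c hc⟩
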